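/- arXiv:2408.13695 — 4 statements merged into one kernel-verified Lean document; each statement's English description precedes it below -/
import Mathlib

section
/- Let p be a prime with p ≡ 3 (mod 8). If s ∈ F_p \ {0, 1} is such that the Legendre elliptic curve E_s over F_p is supersingular, then there exists t ∈ F_p with s = −t². (Equivalently, T_p = U_p, where T_p := {s ∈ F_p \ {0,1} : E_s supersingular} and U_p := {−t² ∈ F_p \ {0,1} : t ∈ F_p, E_{−t²} supersingular}.) -/
open WeierstrassCurve

/-- The Legendre elliptic curve `y² = x(x-1)(x-s)` over a commutative ring. -/
def LegendreCurve {F : Type} [CommRing F] (s : F) : WeierstrassCurve F :=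
  ⟨0, -(s + 1), 0, s, 0⟩

/-- A Weierstrass curve over a finite field of characteristic `p` is supersingular if the number
of its rational points (including the point at infinity) is congruent to `1` modulo `p`. -/
def IsSupersingular (p : ℕ) {F : Type} [Field F] (W : WeierstrassCurve F) : Prop :=
  Nat.card W.toAffine.Point ≡ 1 [MOD p]

/-!
If `-1` is not a square in `𝔽_q`, then for every `x` one of `x`, `-x` is a square. So if `s = u²`,
one of `1 - s`, `s - 1` is a square, and then `(1, 0)` resp. `(s, 0)` is twice a rational
point `P` of `E_s` (on `y² = (x-a)(x-b)(x-c)`, the point `(a, 0)` is halvable when `a - b` and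
`a - c` are squares). Then `P` has order `4` and `(0, 0)` is a `2`-torsion point outside `⟨P⟩`, so
`8 ∣ #E_s(𝔽_q)`. On the other hand `#E_s(𝔽_q) ≤ 2q + 1`, so supersingularity forces
`#E_s(𝔽_q) ∈ {1, q + 1, 2q + 1}`, none of which is divisible by `8` when `q ≡ 3 (mod 8)`.
Hence `s` is not a square, and `-s` is.
-/

open WeierstrassCurve.Affine Finset

theorem FiniteField.isSquare_or_isSquare_neg {F : Type*} [Field F] [Fintype F]
    (h : ¬IsSquare (-1 : F)) (x : F) : IsSquare x ∨ IsSquare (-x) := by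
  classical
  rcases eq_or_ne x 0 with rfl | hx
  · exact .inl .zero
  by_contra! hnx
  have hchar : quadraticChar F (-x) = 1 := by
    rw [neg_eq_neg_one_mul, map_mul, quadraticChar_neg_one_iff_not_isSquare.mpr h,
      quadraticChar_neg_one_iff_not_isSquare.mpr hnx.1, neg_one_mul, neg_neg]
  exact hnx.2 ((quadraticChar_one_iff_isSquare (neg_ne_zero.mpr hx)).mp hchar)

theorem eight_dvd_natCard_of_addOrderOf_eq {G : Type*} [AddCommGroup G] [Finite G] {P T : G}
    (hP : addOrderOf P = 4) (hT : addOrderOf T = 2) (hTP : T ≠ 2 • P) : 8 ∣ Nat.card G := by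
  set K := AddSubgroup.zmultiples P
  have hTK : T ∉ K := by
    intro hmem
    obtain ⟨n, rfl⟩ := AddSubgroup.mem_zmultiples_iff.mp hmem
    have h4 : ((4 : ℕ) : ℤ) ∣ 2 * n := by
      rw [← hP, addOrderOf_dvd_iff_zsmul_eq_zero, mul_zsmul, two_zsmul, ← two_nsmul, ← hT]
      exact addOrderOf_nsmul_eq_zero _
    rw [← mod_addOrderOf_zsmul, hP] at hT hTP
    have hn : n % 4 = 0 ∨ n % 4 = 2 := by omega
    rcases hn with hn | hn <;> simp only [Nat.cast_ofNat, hn] at hT hTP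
    · simp at hT
    · exact hTP (natCast_zsmul P 2)
  have hindex : 2 ∣ K.index := by
    have hTorder : addOrderOf (T : G ⧸ K) = 2 := by
      refine addOrderOf_eq_prime ?_ ?_
      · rw [← QuotientAddGroup.mk_nsmul, ← hT, addOrderOf_nsmul_eq_zero,
          QuotientAddGroup.mk_zero]
      · rwa [Ne, QuotientAddGroup.eq_zero_iff]
    exact hTorder ▸ addOrderOf_dvd_natCard _
  rw [← K.card_mul_index, Nat.card_zmultiples, hP]
  exact mul_dvd_mul_left 4 hindex

namespace WeierstrassCurve.Affine

variable {F : Type*} [Field F] [Finite F]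

instance (W : Affine F) : Finite W.Point :=
  .of_equiv (Option _) (nonsingularPointEquiv W).symm

lemma natCard_point_le (W : Affine F) : Nat.card W.Point ≤ 2 * Nat.card F + 1 := by
  classical
  have := Fintype.ofFinite F
  let S : Finset (F × F) := {xy | W.Nonsingular xy.1 xy.2}
  have hS : #S ≤ 2 * #(univ : Finset F) := by
    refine card_le_mul_card_image_of_maps_to (f := Prod.fst) (fun _ _ ↦ mem_univ _) 2
      fun x _ ↦ ?_
    rcases eq_empty_or_nonempty {xy ∈ S | xy.1 = x} with hempty | ⟨⟨x₀, y₀⟩, h₀⟩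
    · simp [hempty]
    refine (card_le_card fun ⟨x₁, y₁⟩ h₁ ↦ ?_).trans
      (card_le_two (a := (x₀, y₀)) (b := (x₀, W.negY x₀ y₀)))
    simp only [S, mem_filter, mem_univ, true_and] at h₀ h₁
    rcases Y_eq_of_X_eq h₁.1.1 h₀.1.1 (h₁.2.trans h₀.2.symm) with h | h <;>
      simp [h, h₁.2.trans h₀.2.symm]
  calc Nat.card W.Point = #S + 1 := by
        rw [Nat.card_congr (nonsingularPointEquiv W)]
        change Nat.card (Option _) = _
        rw [Finite.card_option, Nat.card_eq_fintype_card, Fintype.card_subtype]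
    _ ≤ 2 * Nat.card F + 1 := by rw [Nat.card_eq_fintype_card]; simpa using hS

end WeierstrassCurve.Affine

theorem not_eight_dvd_natCard_point_of_isSupersingular {F : Type} [Field F] [Finite F]
    (hF : Nat.card F % 8 = 3) {W : WeierstrassCurve F} (hW : IsSupersingular (Nat.card F) W) :
    ¬8 ∣ Nat.card W.toAffine.Point := by
  have hle := natCard_point_le W.toAffine
  have hmod : Nat.card W.toAffine.Point % Nat.card F = 1 := by
    rw [← Nat.mod_eq_of_lt (show 1 < Nat.card F by omega)]
    exact hW
  obtain ⟨k, hk⟩ : ∃ k, Nat.card W.toAffine.Point = Nat.card F * k + 1 :=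
    ⟨_, (hmod ▸ Nat.div_add_mod _ _).symm⟩
  have hk2 : k ≤ 2 := by
    by_contra! hk3
    have := Nat.mul_le_mul_left (Nat.card F) hk3
    omega
  interval_cases k <;> omega

namespace WeierstrassCurve

variable {F : Type*} [Field F]

/-- The curve `y² = (x - a)(x - b)(x - c)`. -/
def ofRoots (a b c : F) : WeierstrassCurve F :=
  ⟨0, -(a + b + c), 0, a * b + b * c + c * a, -(a * b * c)⟩

variable {a b c : F}

lemma equation_ofRoots_iff {x y : F} :
    (ofRoots a b c).toAffine.Equation x y ↔ y ^ 2 = (x - a) * (x - b) * (x - c) := by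
  rw [equation_iff', ← sub_eq_zero (a := y ^ 2)]
  simp only [ofRoots]
  ring_nf

lemma negY_ofRoots (x y : F) : (ofRoots a b c).toAffine.negY x y = -y := by
  simp [negY, ofRoots]

lemma nonsingular_ofRoots_left (hab : a ≠ b) (hac : a ≠ c) :
    (ofRoots a b c).toAffine.Nonsingular a 0 := by
  refine (nonsingular_iff' ..).mpr ⟨equation_ofRoots_iff.mpr (by ring), Or.inl ?_⟩
  have := mul_ne_zero (sub_ne_zero.mpr hab) (sub_ne_zero.mpr hac)
  simp only [ofRoots]
  contrapose! this
  linear_combination -this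

lemma nonsingular_ofRoots_middle (hab : a ≠ b) (hbc : b ≠ c) :
    (ofRoots a b c).toAffine.Nonsingular b 0 := by
  refine (nonsingular_iff' ..).mpr ⟨equation_ofRoots_iff.mpr (by ring), Or.inl ?_⟩
  have := mul_ne_zero (sub_ne_zero.mpr hab) (sub_ne_zero.mpr hbc)
  simp only [ofRoots]
  contrapose! this
  linear_combination this

variable [DecidableEq F]

lemma addOrderOf_ofRoots_some_zero {x : F} (h : (ofRoots a b c).toAffine.Nonsingular x 0) :
    addOrderOf (Point.some x 0 h) = 2 :=
  addOrderOf_eq_prime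
    (by rw [two_nsmul, Point.add_self_of_Y_eq (by rw [negY_ofRoots, neg_zero])])
    (Point.some_ne_zero h)

lemma exists_add_self_eq_ofRoots (h2 : (2 : F) ≠ 0) (hab : a ≠ b) (hac : a ≠ c) (hbc : b ≠ c)
    (hb : IsSquare (a - b)) (hc : IsSquare (a - c)) :
    ∃ P : (ofRoots a b c).toAffine.Point,
      P + P = Point.some a 0 (nonsingular_ofRoots_left hab hac) := by
  obtain ⟨m, hm⟩ := hb
  obtain ⟨n, hn⟩ := hc
  obtain rfl : b = a - m * m := by linear_combination -hm
  obtain rfl : c = a - n * n := by linear_combination -hn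
  have hm0 : m ≠ 0 := by rintro rfl; simp at hab
  have hn0 : n ≠ 0 := by rintro rfl; simp at hac
  have hmn : m + n ≠ 0 := by
    intro h; apply hbc; linear_combination (n - m) * h
  have hy : m * n * (m + n) ≠ -(m * n * (m + n)) := by
    intro h
    exact mul_ne_zero h2 (mul_ne_zero (mul_ne_zero hm0 hn0) hmn) (by linear_combination h)
  -- the tangent at `(a + mn, mn(m + n))` has slope `m + n` and meets the curve again at `(a, 0)`
  have hP : (ofRoots a (a - m * m) (a - n * n)).toAffine.Nonsingular
      (a + m * n) (m * n * (m + n)) :=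
    (nonsingular_iff' ..).mpr ⟨equation_ofRoots_iff.mpr (by ring),
      Or.inr (by simp only [ofRoots]; intro h; exact hy (by linear_combination h))⟩
  have hslope : (ofRoots a (a - m * m) (a - n * n)).toAffine.slope (a + m * n) (a + m * n)
      (m * n * (m + n)) (m * n * (m + n)) = m + n := by
    rw [slope_of_Y_ne rfl (by rwa [negY_ofRoots]), negY_ofRoots, div_eq_iff (sub_ne_zero.mpr hy)]
    simp only [ofRoots]
    ring
  refine ⟨.some _ _ hP, ?_⟩
  rw [Point.add_self_of_Y_ne (by rwa [negY_ofRoots]), Point.some.injEq, hslope]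
  constructor
  · simp only [addX, ofRoots]; ring
  · simp only [addY, negAddY, addX, negY, ofRoots]; ring

theorem eight_dvd_natCard_point_ofRoots [Finite F] (h2 : (2 : F) ≠ 0) (hab : a ≠ b)
    (hac : a ≠ c) (hbc : b ≠ c) (hb : IsSquare (a - b)) (hc : IsSquare (a - c)) :
    8 ∣ Nat.card (ofRoots a b c).toAffine.Point := by
  obtain ⟨P, hP⟩ := exists_add_self_eq_ofRoots h2 hab hac hbc hb hc
  have h2P : addOrderOf (2 • P) = 2 := by
    rw [two_nsmul, hP, addOrderOf_ofRoots_some_zero]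
  refine eight_dvd_natCard_of_addOrderOf_eq (P := P)
    (T := Point.some b 0 (nonsingular_ofRoots_middle hab hbc)) ?_
    (addOrderOf_ofRoots_some_zero _) ?_
  · refine addOrderOf_eq_prime_pow (p := 2) (n := 1) ?_ ?_
    · rw [pow_one]
      intro h
      simp [h] at h2P
    · rw [pow_two, mul_nsmul]
      have h := addOrderOf_nsmul_eq_zero (2 • P)
      rwa [h2P] at h
  · rw [two_nsmul, hP, Ne, Point.some.injEq]
    exact fun h ↦ hab h.1.symm

end WeierstrassCurve

theorem eight_dvd_natCard_point_legendreCurve {F : Type} [Field F] [Fintype F] [DecidableEq F]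
    (h : ¬IsSquare (-1 : F)) {s : F} (hs0 : s ≠ 0) (hs1 : s ≠ 1) (hs : IsSquare s) :
    8 ∣ Nat.card (LegendreCurve s).toAffine.Point := by
  have h2 : (2 : F) ≠ 0 := fun h2 ↦ h ⟨1, by linear_combination -h2⟩
  rcases FiniteField.isSquare_or_isSquare_neg h (1 - s) with h1 | h1
  · rw [show LegendreCurve s = ofRoots 1 0 s by ext <;> simp only [LegendreCurve, ofRoots] <;> ring]
    exact eight_dvd_natCard_point_ofRoots h2 one_ne_zero hs1.symm hs0.symm ⟨1, by ring⟩ h1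
  · rw [show LegendreCurve s = ofRoots s 0 1 by ext <;> simp only [LegendreCurve, ofRoots] <;> ring]
    exact eight_dvd_natCard_point_ofRoots h2 hs0 hs1 zero_ne_one (by simpa using hs)
      (by simpa using h1)

/-- Let `p ≡ 3 (mod 8)` be a prime. If `s ∈ F_p \ {0, 1}` is such that the Legendre curve
`E_s` over `F_p` is supersingular, then `s = -t²` for some `t ∈ F_p`. -/
theorem legendre_supersingular_is_neg_square (p : ℕ) [Fact p.Prime] (hp : p % 8 = 3)
    (s : ZMod p) (hs0 : s ≠ 0) (hs1 : s ≠ 1)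
    (hss : IsSupersingular p (LegendreCurve s)) :
    ∃ t : ZMod p, s = -t ^ 2 := by
  have hneg : ¬IsSquare (-1 : ZMod p) := by
    rw [ZMod.exists_sq_eq_neg_one_iff]
    omega
  rcases FiniteField.isSquare_or_isSquare_neg hneg s with hsq | ⟨t, ht⟩
  · exact absurd (eight_dvd_natCard_point_legendreCurve hneg hs0 hs1 hsq)
      (not_eight_dvd_natCard_point_of_isSupersingular (by rwa [Nat.card_zmod])
        (by rwa [Nat.card_zmod]))
  · exact ⟨t, by rw [sq, ← ht, neg_neg]⟩
end

section
/- Let p > 3 be a prime with p ≡ 3 (mod 4), let t ∈ F_p with t ≠ 0, and let E be the elliptic curve y² = x(x−1)(x+t²) over F_p. Then neither of the 2-torsion points Q₀ = (0, 0) and Q₂ = (−t², 0) lies in [2]E(F_p), the image of the doubling map on the group of F_p-rational points of E. -/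
/-!
If `2P = (x₀, y₀)` with `P = (x, y)` on `y² = f(x)`, the tangent-line doubling formula gives
`x₀ - e = (((x - e)² - f'(e)) / 2y)²` for every root `e` of the cubic `f`, so `x₀ - e` is a square.
For `Q₀` take `e = 1`, making `-1` a square; for `Q₂` take `e = 0`, making `-t²` a square.
Both are impossible because `-1` is not a square modulo a prime `p ≡ 3 (mod 4)`.
-/

open WeierstrassCurve

/-- The elliptic curve `y² = x(x-1)(x+t²)`, i.e. `y² = x³ + (t²-1)x² - t²x`. -/
def TCurve {F : Type} [CommRing F] (t : F) : WeierstrassCurve F :=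
  ⟨0, t ^ 2 - 1, 0, -t ^ 2, 0⟩

namespace WeierstrassCurve.Affine

variable {F : Type*} [Field F] [DecidableEq F] {W : Affine F}

lemma exists_eq_addX_of_two_nsmul_eq_some {x₀ y₀ : F} {h₀ : W.Nonsingular x₀ y₀} {P : W.Point}
    (hP : 2 • P = .some _ _ h₀) :
    ∃ x y, W.Equation x y ∧ y ≠ W.negY x y ∧ x₀ = W.addX x x (W.slope x x y y) := by
  rw [two_nsmul] at hP
  rcases P with _ | @⟨x, y, h⟩
  · exact absurd (zero_add (0 : W.Point) ▸ hP).symm (Point.some_ne_zero h₀)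
  by_cases hy : y = W.negY x y
  · exact absurd (Point.add_self_of_Y_eq hy ▸ hP).symm (Point.some_ne_zero h₀)
  rw [Point.add_self_of_Y_ne hy, Point.some.injEq] at hP
  exact ⟨x, y, h.1, hy, hP.1.symm⟩

lemma isSquare_addX_sub (ha₁ : W.a₁ = 0) (ha₃ : W.a₃ = 0) {e : F} (he : W.Equation e 0)
    {x y : F} (hxy : W.Equation x y) (hy : y ≠ W.negY x y) :
    IsSquare (W.addX x x (W.slope x x y y) - e) := by
  have h2y : 2 * y ≠ 0 := by
    intro h
    apply hy
    simp only [negY, ha₁, ha₃]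
    linear_combination h
  have h2 : (2 : F) ≠ 0 := left_ne_zero_of_mul h2y
  have hy0 : y ≠ 0 := right_ne_zero_of_mul h2y
  rw [equation_iff, ha₁, ha₃] at he hxy
  refine ⟨((x - e) ^ 2 - (3 * e ^ 2 + 2 * W.a₂ * e + W.a₄)) / (2 * y), ?_⟩
  have hslope : W.slope x x y y = (3 * x ^ 2 + 2 * W.a₂ * x + W.a₄) / (2 * y) := by
    rw [slope_of_Y_ne rfl hy, negY, ha₁, ha₃]
    ring
  rw [addX, hslope, ha₁]
  field_simp
  linear_combination (-4 * (W.a₂ + 2 * x + e)) * hxy + (4 * (W.a₂ + 2 * x + e)) * he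

lemma isSquare_sub_of_two_nsmul_eq_some (ha₁ : W.a₁ = 0) (ha₃ : W.a₃ = 0) {e : F}
    (he : W.Equation e 0) {x₀ y₀ : F} {h₀ : W.Nonsingular x₀ y₀} {P : W.Point}
    (hP : 2 • P = .some _ _ h₀) : IsSquare (x₀ - e) := by
  obtain ⟨x, y, hxy, hy, rfl⟩ := exists_eq_addX_of_two_nsmul_eq_some hP
  exact isSquare_addX_sub ha₁ ha₃ he hxy hy

end WeierstrassCurve.Affine

lemma tCurve_equation_zero_iff {F : Type} [CommRing F] (t e : F) :
    (TCurve t).toAffine.Equation e 0 ↔ e * (e - 1) * (e + t ^ 2) = 0 := by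
  rw [Affine.equation_iff, eq_comm]
  simp only [TCurve]
  ring_nf

theorem neg_square_torsion_not_in_double_general (p : ℕ) [Fact p.Prime]
    (hp : p % 4 = 3) (t : ZMod p) (ht : t ≠ 0) :
    (∀ (h₀ : (TCurve t).toAffine.Nonsingular 0 0) (P : (TCurve t).toAffine.Point),
      2 • P ≠ WeierstrassCurve.Affine.Point.some _ _ h₀) ∧
    (∀ (h₂ : (TCurve t).toAffine.Nonsingular (-t ^ 2) 0) (P : (TCurve t).toAffine.Point),
      2 • P ≠ WeierstrassCurve.Affine.Point.some _ _ h₂) := by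
  have hneg : ¬IsSquare (-1 : ZMod p) := fun h => ZMod.exists_sq_eq_neg_one_iff.mp h hp
  have he₀ : (TCurve t).toAffine.Equation 0 0 := (tCurve_equation_zero_iff t 0).mpr (by ring)
  have he₁ : (TCurve t).toAffine.Equation 1 0 := (tCurve_equation_zero_iff t 1).mpr (by ring)
  refine ⟨fun h₀ P hP => hneg ?_, fun h₂ P hP => hneg ?_⟩
  · simpa using Affine.isSquare_sub_of_two_nsmul_eq_some rfl rfl he₁ hP
  · have h := (Affine.isSquare_sub_of_two_nsmul_eq_some rfl rfl he₀ hP).div (IsSquare.sq t)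
    rwa [sub_zero, neg_div, div_self (pow_ne_zero 2 ht)] at h

/-- Let `p > 3` be a prime with `p ≡ 3 (mod 4)`, `t ∈ F_p` with `t ≠ 0`, and let `E` be
the elliptic curve `y² = x(x-1)(x+t²)` over `F_p`. Then neither of the 2-torsion points
`Q₀ = (0,0)` and `Q₂ = (-t²,0)` is the double of an `F_p`-rational point of `E`. -/
theorem neg_square_torsion_not_in_double (p : ℕ) [Fact p.Prime] (hp3 : 3 < p)
    (hp : p % 4 = 3) (t : ZMod p) (ht : t ≠ 0) :
    (∀ (h₀ : (TCurve t).toAffine.Nonsingular 0 0) (P : (TCurve t).toAffine.Point),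
      2 • P ≠ WeierstrassCurve.Affine.Point.some _ _ h₀) ∧
    (∀ (h₂ : (TCurve t).toAffine.Nonsingular (-t ^ 2) 0) (P : (TCurve t).toAffine.Point),
      2 • P ≠ WeierstrassCurve.Affine.Point.some _ _ h₂) :=
  neg_square_torsion_not_in_double_general p hp t ht
end

section
/- Let p ≥ 5 be a prime, let λ, λ' ∈ F_p \ {0, 1, −1}, and let a, a' ∈ F_{p²} satisfy a² = λ² − 1 and a'² = λ'² − 1. If (λ − a)² = (λ' − a')², then λ' = λ or λ' = −λ. (This is the injectivity of the map Φ sending the class of λ modulo λ ↦ −λ to the class of Λ(λ) = −(λ−a)² modulo s ↦ 1/s.) -/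
/-!
With `u = λ - a` we have `u (λ + a) = λ² - a² = 1`, so `λ = (u + u⁻¹) / 2` is recovered from `u`.
Hence `u² = u'²` forces `u' = ±u`, and then `λ' = ±λ` (the sign passes through `u ↦ u + u⁻¹`).
-/

lemma sub_mul_add_eq_one_of_sq_eq_sq_sub_one {R : Type*} [CommRing R] {x a : R}
    (ha : a ^ 2 = x ^ 2 - 1) : (x - a) * (x + a) = 1 := by
  linear_combination -ha

lemma two_mul_eq_sub_add_inv_of_sq_eq_sq_sub_one {K : Type*} [Field K] {x a : K}
    (ha : a ^ 2 = x ^ 2 - 1) : 2 * x = (x - a) + (x - a)⁻¹ := by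
  rw [inv_eq_of_mul_eq_one_right (sub_mul_add_eq_one_of_sq_eq_sq_sub_one ha)]
  ring

theorem eq_or_eq_neg_of_sub_sq_eq_sub_sq {K : Type*} [Field K] (h2 : (2 : K) ≠ 0)
    {x y a b : K} (ha : a ^ 2 = x ^ 2 - 1) (hb : b ^ 2 = y ^ 2 - 1)
    (h : (x - a) ^ 2 = (y - b) ^ 2) : y = x ∨ y = -x := by
  have hx := two_mul_eq_sub_add_inv_of_sq_eq_sq_sub_one ha
  have hy := two_mul_eq_sub_add_inv_of_sq_eq_sq_sub_one hb
  rcases sq_eq_sq_iff_eq_or_eq_neg.mp h.symm with h | h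
  · left
    apply mul_left_cancel₀ h2
    rw [hx, hy, h]
  · right
    apply mul_left_cancel₀ h2
    rw [hy, h, inv_neg, mul_neg, hx, neg_add]

lemma GaloisField.two_ne_zero {p : ℕ} [Fact p.Prime] (hp : p ≠ 2) (n : ℕ) :
    (2 : GaloisField p n) ≠ 0 :=
  Ring.two_ne_zero (by rwa [ringChar.eq (GaloisField p n) p])

theorem lambda_eq_of_sq_eq_general (p : ℕ) [Fact p.Prime] (hp5 : 5 ≤ p)
    (l l' : ZMod p)
    (a a' : GaloisField p 2)
    (ha : a ^ 2 = algebraMap (ZMod p) (GaloisField p 2) l ^ 2 - 1)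
    (ha' : a' ^ 2 = algebraMap (ZMod p) (GaloisField p 2) l' ^ 2 - 1)
    (h : (algebraMap (ZMod p) (GaloisField p 2) l - a) ^ 2 =
      (algebraMap (ZMod p) (GaloisField p 2) l' - a') ^ 2) :
    l' = l ∨ l' = -l := by
  have hinj := (algebraMap (ZMod p) (GaloisField p 2)).injective
  rcases eq_or_eq_neg_of_sub_sq_eq_sub_sq (GaloisField.two_ne_zero (by omega) 2) ha ha' h
    with h | h
  · exact .inl (hinj h)
  · exact .inr (hinj (by rw [h, map_neg]))

/-- Injectivity of the map `Φ`: let `p ≥ 5` be a prime, `λ, λ' ∈ F_p \ {0, 1, -1}`, and let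
`a, a' ∈ F_{p²}` be square roots of `λ² - 1` and `λ'² - 1` respectively. If
`(λ - a)² = (λ' - a')²`, then `λ' = λ` or `λ' = -λ`. -/
theorem lambda_eq_of_sq_eq (p : ℕ) [Fact p.Prime] (hp5 : 5 ≤ p)
    (l l' : ZMod p) (hl0 : l ≠ 0) (hl1 : l ≠ 1) (hln1 : l ≠ -1)
    (hl'0 : l' ≠ 0) (hl'1 : l' ≠ 1) (hl'n1 : l' ≠ -1)
    (a a' : GaloisField p 2)
    (ha : a ^ 2 = algebraMap (ZMod p) (GaloisField p 2) l ^ 2 - 1)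
    (ha' : a' ^ 2 = algebraMap (ZMod p) (GaloisField p 2) l' ^ 2 - 1)
    (h : (algebraMap (ZMod p) (GaloisField p 2) l - a) ^ 2 =
      (algebraMap (ZMod p) (GaloisField p 2) l' - a') ^ 2) :
    l' = l ∨ l' = -l :=
  lambda_eq_of_sq_eq_general p hp5 l l' a a' ha ha' h
end

section
/- Let p be a prime with p ≡ 1 (mod 4), let λ ∈ F_p \ {0, 1, −1}, and let a ∈ F_{p²} satisfy a² = λ² − 1. If the Legendre elliptic curve E_{−(λ−a)²} over F_{p²} is supersingular, then λ² − 1 is not a square in F_p (i.e., a ∉ F_p). -/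
open WeierstrassCurve

/-!
If `λ² - 1` is a square in `F_p`, then `a ∈ F_p`, so `s = -(λ - a)²` lies in `F_p`. Over a field
with `q` elements, `#E_s ≡ 1 - [x^(q-1)] f^((q-1)/2)` (mod `p`) for `f = x (x - 1) (x - s)`,
because `∑ₓ xⁱ` vanishes for `i < 2 (q - 1)` unless `i = q - 1`. For `q = p²` and
`m = (p - 1)/2` we have `f^((p²-1)/2) = f^m(x^p) · f^m` over `F_p`, so that coefficient is the
square of the one for `q = p`: `E_s` is supersingular over `F_{p²}` if and only if it is over
`F_p`. But `E_s(F_p)` contains the full `2`-torsion `{O, (0,0), (1,0), (s,0)}`, so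
`4 ∣ #E_s(F_p) ≤ 2p + 1`, while `#E_s(F_p) ≡ 1 (mod p)` forces `#E_s(F_p) ∈ {1, p + 1, 2p + 1}`,
none of which is divisible by `4` when `p ≡ 1 (mod 4)`.
-/

open Polynomial Finset

namespace FiniteField

variable {K : Type*} [Field K] [Fintype K]

theorem sum_pow_of_lt_two_mul_card_sub_one {i : ℕ} (hi : i < 2 * (Fintype.card K - 1)) :
    ∑ x : K, x ^ i = if i = Fintype.card K - 1 then -1 else 0 := by
  classical
  rcases lt_or_ge i (Fintype.card K - 1) with hlt | hge
  · rw [sum_pow_lt_card_sub_one K i hlt, if_neg hlt.ne]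
  obtain ⟨j, rfl⟩ := Nat.exists_eq_add_of_le hge
  have hq : 1 < Fintype.card K := Fintype.one_lt_card
  have hj : j < Fintype.card K - 1 := by omega
  -- `x ^ (q - 1) = 1` away from `0`, so the sum is `∑ x, x ^ j` with the term at `0` removed
  calc ∑ x : K, x ^ (Fintype.card K - 1 + j)
      = ∑ x ∈ univ.erase 0, x ^ j := by
        rw [← add_sum_erase _ _ (mem_univ 0), zero_pow (by omega), zero_add]
        refine sum_congr rfl fun x hx => ?_
        rw [pow_add, pow_card_sub_one_eq_one x (ne_of_mem_erase hx), one_mul]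
    _ = -(0 : K) ^ j := by
        have h := add_sum_erase univ (· ^ j) (mem_univ (0 : K))
        rw [sum_pow_lt_card_sub_one K j hj] at h
        linear_combination h
    _ = _ := by
        rcases Nat.eq_zero_or_pos j with rfl | hj0
        · simp
        · simp [hj0.ne', zero_pow hj0.ne']

theorem sum_eval_eq_neg_coeff (g : K[X]) (hg : g.natDegree < 2 * (Fintype.card K - 1)) :
    ∑ x : K, g.eval x = -g.coeff (Fintype.card K - 1) := by
  have hq : 1 < Fintype.card K := Fintype.one_lt_card
  simp_rw [eval_eq_sum_range' hg, sum_comm (γ := K), ← mul_sum]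
  rw [sum_eq_single_of_mem (Fintype.card K - 1) (mem_range.mpr (by omega))]
  · rw [sum_pow_of_lt_two_mul_card_sub_one (by omega), if_pos rfl, mul_neg_one]
  · intro i hi hne
    rw [sum_pow_of_lt_two_mul_card_sub_one (mem_range.mp hi), if_neg hne, mul_zero]

theorem card_sqrts_eq_quadraticChar_add_one [DecidableEq K] (hK : ringChar K ≠ 2) (d : K) :
    (Fintype.card {y : K // y ^ 2 = d} : ℤ) = quadraticChar K d + 1 := by
  rw [← quadraticChar_card_sqrts hK d, Set.toFinset_card]
  rfl

end FiniteField

theorem Polynomial.coeff_expand_mul_self {R : Type*} [CommSemiring R] {p i : ℕ} (hip : i < p)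
    {h : R[X]} (hh : h.natDegree < p + i) (j : ℕ) :
    (expand R p h * h).coeff (p * j + i) = h.coeff j * h.coeff i := by
  have hp : 0 < p := by omega
  rw [coeff_mul, sum_eq_single (p * j, i) _ (fun hn => (hn (by simp)).elim),
    coeff_expand_mul' hp]
  rintro ⟨a, b⟩ hab hne
  rw [HasAntidiagonal.mem_antidiagonal] at hab
  dsimp only at hab ⊢
  rw [coeff_expand hp]
  split_ifs with hdvd
  · obtain ⟨k, rfl⟩ := hdvd
    rcases lt_trichotomy k j with hkj | rfl | hkj
    · have : p * k + p ≤ p * j := by nlinarith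
      rw [coeff_eq_zero_of_natDegree_lt (n := b) (by omega), mul_zero]
    · exact absurd (by simp; omega) hne
    · have : p * j + p ≤ p * k := by nlinarith
      omega
  · rw [zero_mul]

theorem ZMod.coeff_pow_sq_div_two {p : ℕ} [Fact p.Prime] (hp : p ≠ 2)
    {f : (ZMod p)[X]} (hf : f.natDegree ≤ 4) :
    (f ^ (p ^ 2 / 2)).coeff (p ^ 2 - 1) = (f ^ (p / 2)).coeff (p - 1) ^ 2 := by
  obtain ⟨m, rfl⟩ := (Fact.out : p.Prime).odd_of_ne_two hp
  have hdeg : (f ^ m).natDegree < 2 * m + 1 + 2 * m :=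
    natDegree_pow_le.trans_lt (by nlinarith)
  have hsq : (2 * m + 1) ^ 2 = 2 * (m * (2 * m + 1) + m) + 1 := by ring
  -- `f ^ (p² / 2) = (f ^ m) ^ p * f ^ m`, and raising to the `p`-th power is `expand p`
  have hsplit : f ^ ((2 * m + 1) ^ 2 / 2) = expand (ZMod _) (2 * m + 1) (f ^ m) * f ^ m := by
    rw [ZMod.expand_card, ← pow_mul, ← pow_add, hsq]
    congr 1
    omega
  have hindex : (2 * m + 1) ^ 2 - 1 = (2 * m + 1) * (2 * m) + 2 * m := by
    rw [hsq]; ring_nf; omega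
  rw [hsplit, hindex, Nat.add_sub_cancel, show (2 * m + 1) / 2 = m by omega,
    coeff_expand_mul_self (by omega) hdeg, sq]

noncomputable def WeierstrassCurve.Affine.pointEquivOption {F : Type*} [Field F] {W : Affine F}
    (hΔ : W.Δ ≠ 0) : W.Point ≃ Option {xy : F × F // W.Equation xy.1 xy.2} where
  toFun
    | .zero => none
    | .some x y h => some ⟨(x, y), h.1⟩
  invFun
    | none => .zero
    | some ⟨_, h⟩ => .some _ _ ((W.equation_iff_nonsingular_of_Δ_ne_zero hΔ).mp h)
  left_inv P := by cases P <;> rfl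
  right_inv o := by rcases o with _ | ⟨⟨x, y⟩, h⟩ <;> rfl

section LegendreCurve

section CommRing

variable {R : Type} [CommRing R]

theorem legendreCurve_equation_iff {s x y : R} :
    (LegendreCurve s).toAffine.Equation x y ↔ y ^ 2 = x * (x - 1) * (x - s) := by
  rw [Affine.equation_iff]
  simp only [LegendreCurve]
  constructor <;> intro h <;> linear_combination h

theorem legendreCurve_negY (s x y : R) : (LegendreCurve s).toAffine.negY x y = -y := by
  simp [Affine.negY, LegendreCurve]

theorem legendreCurve_Δ (s : R) : (LegendreCurve s).Δ = 16 * (s * (s - 1)) ^ 2 := by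
  simp only [WeierstrassCurve.Δ, b₂, b₄, b₆, b₈, LegendreCurve]
  ring

end CommRing

variable {F : Type} [Field F] {s : F}

theorem legendreCurve_Δ_ne_zero (h2 : (2 : F) ≠ 0) (hs0 : s ≠ 0) (hs1 : s ≠ 1) :
    (LegendreCurve s).Δ ≠ 0 := by
  rw [legendreCurve_Δ, show (16 : F) = 2 ^ 4 by norm_num]
  exact mul_ne_zero (pow_ne_zero _ h2) (pow_ne_zero _ (mul_ne_zero hs0 (sub_ne_zero.mpr hs1)))

theorem legendreCurve_four_dvd_card (h2 : (2 : F) ≠ 0) (hs0 : s ≠ 0) (hs1 : s ≠ 1) :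
    4 ∣ Nat.card (LegendreCurve s).toAffine.Point := by
  classical
  have hroot {x : F} (hx : x * (x - 1) * (x - s) = 0) :
      (LegendreCurve s).toAffine.Nonsingular x 0 :=
    ((LegendreCurve s).toAffine.equation_iff_nonsingular_of_Δ_ne_zero
      (legendreCurve_Δ_ne_zero h2 hs0 hs1)).mp (legendreCurve_equation_iff.mpr (by rw [hx]; ring))
  -- `P = -P` forces `y = 0`, hence `x ∈ {0, 1, s}`
  have htors : (((nsmulAddMonoidHom 2).ker : AddSubgroup (LegendreCurve s).toAffine.Point) :
      Set (LegendreCurve s).toAffine.Point) =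
      {0, .some _ _ (hroot (x := 0) (by ring)), .some _ _ (hroot (x := 1) (by ring)),
        .some _ _ (hroot (x := s) (by ring))} := by
    ext (_ | ⟨x, y, h⟩)
    · exact iff_of_true (smul_zero 2) (Set.mem_insert _ _)
    simp only [SetLike.mem_coe, AddMonoidHom.mem_ker, nsmulAddMonoidHom_apply, two_nsmul,
      add_eq_zero_iff_eq_neg, Affine.Point.neg_some, Affine.Point.some.injEq, legendreCurve_negY,
      true_and, Set.mem_insert_iff, Set.mem_singleton_iff, Affine.Point.some_ne_zero, false_or]
    have hy : y = -y ↔ y = 0 :=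
      ⟨fun hy => (mul_eq_zero.mp (by linear_combination hy : (2 : F) * y = 0)).resolve_left h2,
        fun hy => by rw [hy, neg_zero]⟩
    rw [hy]
    constructor
    · rintro rfl
      have hx : x * (x - 1) * (x - s) = 0 := by rw [← legendreCurve_equation_iff.mp h.1]; ring
      simp only [mul_eq_zero, sub_eq_zero] at hx
      tauto
    · rintro (⟨-, rfl⟩ | ⟨-, rfl⟩ | ⟨-, rfl⟩) <;> rfl
  have hcard :
      Nat.card ((nsmulAddMonoidHom 2).ker : AddSubgroup (LegendreCurve s).toAffine.Point) = 4 := by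
    rw [← SetLike.coe_sort_coe, htors, Nat.card_coe_set_eq, Set.ncard_insert_of_notMem,
      Set.ncard_insert_of_notMem, Set.ncard_pair]
    all_goals simp [hs0.symm, hs1.symm]
  exact hcard ▸ AddSubgroup.card_addSubgroup_dvd_card _

variable [Fintype F]

theorem legendreCurve_card_eq_sum_card_sqrts [DecidableEq F] (h2 : (2 : F) ≠ 0) (hs0 : s ≠ 0)
    (hs1 : s ≠ 1) :
    Nat.card (LegendreCurve s).toAffine.Point =
      1 + ∑ x : F, Fintype.card {y : F // y ^ 2 = x * (x - 1) * (x - s)} := by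
  have e : {xy : F × F // (LegendreCurve s).toAffine.Equation xy.1 xy.2} ≃
      Σ x : F, {y : F // y ^ 2 = x * (x - 1) * (x - s)} :=
    (Equiv.subtypeProdEquivSigmaSubtype _).trans
      (Equiv.sigmaCongrRight fun _ => Equiv.subtypeEquivRight fun _ => legendreCurve_equation_iff)
  rw [Nat.card_congr ((Affine.pointEquivOption (legendreCurve_Δ_ne_zero h2 hs0 hs1)).trans
    (Equiv.optionCongr e)), Nat.card_eq_fintype_card, Fintype.card_option, Fintype.card_sigma,
    add_comm]

theorem legendreCurve_card_le (hF : ringChar F ≠ 2) (hs0 : s ≠ 0) (hs1 : s ≠ 1) :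
    Nat.card (LegendreCurve s).toAffine.Point ≤ 2 * Fintype.card F + 1 := by
  classical
  have hsqrts (d : F) : Fintype.card {y : F // y ^ 2 = d} ≤ 2 := by
    have := FiniteField.card_sqrts_eq_quadraticChar_add_one hF d
    rcases quadraticChar_isQuadratic F d with h | h | h <;> omega
  have := sum_le_sum fun x (_ : x ∈ univ) => hsqrts (x * (x - 1) * (x - s))
  rw [sum_const, card_univ, smul_eq_mul] at this
  rw [legendreCurve_card_eq_sum_card_sqrts (Ring.two_ne_zero hF) hs0 hs1]
  omega

theorem legendreCurve_card_cast_eq_sum_pow (hF : ringChar F ≠ 2) (hs0 : s ≠ 0) (hs1 : s ≠ 1) :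
    (Nat.card (LegendreCurve s).toAffine.Point : F) =
      1 + ∑ x : F, (x * (x - 1) * (x - s)) ^ (Fintype.card F / 2) := by
  classical
  have hsqrts (d : F) :
      (Fintype.card {y : F // y ^ 2 = d} : F) = d ^ (Fintype.card F / 2) + 1 := by
    rw [← quadraticChar_eq_pow_of_char_ne_two' hF]
    exact_mod_cast
      congrArg (Int.cast (R := F)) (FiniteField.card_sqrts_eq_quadraticChar_add_one hF d)
  rw [legendreCurve_card_eq_sum_card_sqrts (Ring.two_ne_zero hF) hs0 hs1]
  push_cast
  simp [hsqrts, sum_add_distrib]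

theorem isSupersingular_legendreCurve_iff_coeff_eq_zero {p : ℕ} [CharP F p] (hp : p ≠ 2)
    (hs0 : s ≠ 0) (hs1 : s ≠ 1) :
    IsSupersingular p (LegendreCurve s) ↔
      ((X * (X - 1) * (X - C s)) ^ (Fintype.card F / 2)).coeff (Fintype.card F - 1) = 0 := by
  have hF : ringChar F ≠ 2 := by rwa [ringChar.eq F p]
  have hq := FiniteField.odd_card_of_char_ne_two hF
  have hq1 : 1 < Fintype.card F := Fintype.one_lt_card
  have hdeg : ((X * (X - 1) * (X - C s)) ^ (Fintype.card F / 2)).natDegree <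
      2 * (Fintype.card F - 1) := by
    refine natDegree_pow_le.trans_lt ?_
    have : (X * (X - 1) * (X - C s)).natDegree ≤ 3 := by compute_degree
    calc Fintype.card F / 2 * (X * (X - 1) * (X - C s)).natDegree
        ≤ Fintype.card F / 2 * 3 := Nat.mul_le_mul_left _ this
      _ < 2 * (Fintype.card F - 1) := by omega
  have hsum := FiniteField.sum_eval_eq_neg_coeff _ hdeg
  simp only [eval_pow, eval_mul, eval_sub, eval_X, eval_one, eval_C] at hsum
  rw [IsSupersingular, ← CharP.natCast_eq_natCast F p,
    legendreCurve_card_cast_eq_sum_pow hF hs0 hs1, hsum, Nat.cast_one, add_eq_left, neg_eq_zero]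

end LegendreCurve

theorem not_isSupersingular_legendreCurve_of_mod_four_eq_one {p : ℕ} [Fact p.Prime]
    (hp : p % 4 = 1) {s : ZMod p} (hs0 : s ≠ 0) (hs1 : s ≠ 1) :
    ¬ IsSupersingular p (LegendreCurve s) := by
  intro hss
  have hF : ringChar (ZMod p) ≠ 2 := by rw [ZMod.ringChar_zmod_n]; omega
  have hle := legendreCurve_card_le hF hs0 hs1
  have h4 := legendreCurve_four_dvd_card (Ring.two_ne_zero hF) hs0 hs1
  rw [ZMod.card] at hle
  set N := Nat.card (LegendreCurve s).toAffine.Point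
  -- `N ≡ 1 [MOD p]` and `N ≤ 2p + 1` leave `N ∈ {1, p + 1, 2p + 1}`, none divisible by `4`
  have hN : N = p * (N / p) + 1 := by
    have hmod : N % p = 1 := Eq.trans hss (Nat.mod_eq_of_lt (Fact.out : p.Prime).one_lt)
    rw [← hmod, Nat.div_add_mod]
  have hk : N / p ≤ 2 := Nat.le_of_mul_le_mul_left (by omega) (by omega : 0 < p)
  interval_cases N / p <;> omega

theorem isSupersingular_legendreCurve_algebraMap_iff {p : ℕ} [Fact p.Prime] (hp : p ≠ 2)
    {s : ZMod p} (hs0 : s ≠ 0) (hs1 : s ≠ 1) :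
    IsSupersingular p (LegendreCurve (algebraMap (ZMod p) (GaloisField p 2) s)) ↔
      IsSupersingular p (LegendreCurve s) := by
  have := Fintype.ofFinite (GaloisField p 2)
  have hinj := (algebraMap (ZMod p) (GaloisField p 2)).injective
  have hmap : X * (X - 1) * (X - C (algebraMap (ZMod p) (GaloisField p 2) s)) =
      (X * (X - 1) * (X - C s)).map (algebraMap (ZMod p) (GaloisField p 2)) := by simp
  rw [isSupersingular_legendreCurve_iff_coeff_eq_zero hp ((map_ne_zero_iff _ hinj).mpr hs0)
      ((map_ne_one_iff _ hinj).mpr hs1),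
    isSupersingular_legendreCurve_iff_coeff_eq_zero hp hs0 hs1,
    ← Nat.card_eq_fintype_card, GaloisField.card p 2 two_ne_zero, ZMod.card, hmap,
    ← Polynomial.map_pow, coeff_map, map_eq_zero_iff _ hinj,
    ZMod.coeff_pow_sq_div_two hp (by compute_degree!), pow_eq_zero_iff two_ne_zero]

theorem neg_sub_sq_ne_zero {K : Type*} [Field K] {l b : K} (hb : b ^ 2 = l ^ 2 - 1) :
    -(l - b) ^ 2 ≠ 0 := by
  intro h
  obtain rfl : b = l := by
    rw [neg_eq_zero, sq_eq_zero_iff, sub_eq_zero] at h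
    exact h.symm
  exact one_ne_zero (by linear_combination hb : (1 : K) = 0)

theorem neg_sub_sq_ne_one {K : Type*} [Field K] (h2 : (2 : K) ≠ 0) {l b : K} (hl : l ≠ 0)
    (hb : b ^ 2 = l ^ 2 - 1) : -(l - b) ^ 2 ≠ 1 := by
  intro h
  -- `(l - b)² = -1` and `(l - b) (l + b) = 1` give `(l - b) · 2l = 0`
  have : (l - b) * (2 * l) = 0 := by linear_combination -h - hb
  rcases mul_eq_zero.mp this with h' | h'
  · simp [h'] at h
  · exact mul_ne_zero h2 hl h'

theorem not_isSquare_of_supersingular_general (p : ℕ) [Fact p.Prime] (hp : p % 4 = 1)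
    (l : ZMod p) (hl0 : l ≠ 0)
    (a : GaloisField p 2)
    (ha : a ^ 2 = algebraMap (ZMod p) (GaloisField p 2) l ^ 2 - 1)
    (hss : IsSupersingular p
      (LegendreCurve (-(algebraMap (ZMod p) (GaloisField p 2) l - a) ^ 2))) :
    ¬ IsSquare (l ^ 2 - 1) := by
  rintro ⟨r, hr⟩
  have h2 : (2 : ZMod p) ≠ 0 := Ring.two_ne_zero (by rw [ZMod.ringChar_zmod_n]; omega)
  obtain ⟨b, rfl, hb⟩ : ∃ b : ZMod p,
      algebraMap (ZMod p) (GaloisField p 2) b = a ∧ b ^ 2 = l ^ 2 - 1 := by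
    have : a ^ 2 = algebraMap (ZMod p) (GaloisField p 2) r ^ 2 := by
      rw [ha, ← map_pow, ← map_pow, ← map_one (algebraMap (ZMod p) _), ← map_sub, hr, sq]
    rcases sq_eq_sq_iff_eq_or_eq_neg.mp this with h | h
    exacts [⟨r, h.symm, by rw [sq, hr]⟩, ⟨-r, by rw [h, map_neg], by rw [neg_sq, sq, hr]⟩]
  rw [← map_sub, ← map_pow, ← map_neg] at hss
  have hs0 := neg_sub_sq_ne_zero hb
  have hs1 := neg_sub_sq_ne_one h2 hl0 hb
  exact not_isSupersingular_legendreCurve_of_mod_four_eq_one hp hs0 hs1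
    ((isSupersingular_legendreCurve_algebraMap_iff (by omega) hs0 hs1).mp hss)

/-- Let `p ≡ 1 (mod 4)` be a prime, `λ ∈ F_p \ {0, 1, -1}`, and `a ∈ F_{p²}` a square root
of `λ² - 1`. If the Legendre curve `E_{-(λ-a)²}` over `F_{p²}` is supersingular, then
`λ² - 1` is not a square in `F_p`. -/
theorem not_isSquare_of_supersingular (p : ℕ) [Fact p.Prime] (hp : p % 4 = 1)
    (l : ZMod p) (hl0 : l ≠ 0) (hl1 : l ≠ 1) (hln1 : l ≠ -1)
    (a : GaloisField p 2)
    (ha : a ^ 2 = algebraMap (ZMod p) (GaloisField p 2) l ^ 2 - 1)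
    (hss : IsSupersingular p
      (LegendreCurve (-(algebraMap (ZMod p) (GaloisField p 2) l - a) ^ 2))) :
    ¬ IsSquare (l ^ 2 - 1) :=
  not_isSquare_of_supersingular_general p hp l hl0 a ha hss
end
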